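/- For n ≥ 2, if n is even then every single consistent clue determines a unique 1 × n Numbrix solution (so the maximum number of clues not defining a puzzle is 0 in the sense that any 1 consistent clue suffices). -/

import Mathlib

/-- Adjacency on a `1 × n` board (cells `Fin n`): differing by exactly 1. -/
def Adj1 {n : ℕ} (a b : Fin n) : Prop := a.val + 1 = b.val ∨ b.val + 1 = a.val

/-- A `1 × n` Numbrix solution: a bijection onto `{1, …, n}` with consecutive
values on adjacent cells. -/
def IsNumbrix1 {n : ℕ} (f : Fin n → ℕ) : Prop :=
  (∀ c, 1 ≤ f c ∧ f c ≤ n) ∧ Function.Injective f ∧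
    ∀ c c', f c' = f c + 1 → Adj1 c c'

/-!
The inverse of a `1 × n` Numbrix solution is a Hamiltonian path of the board, and the board is
itself a path, so the only solutions are `i ↦ i + 1` and its reversal `i ↦ n - i`: the end cell `0`
has a single neighbour, so it must carry `1` or `n`, and from there each value is forced cell by
cell. The two solutions agree at a cell `c` only when `c + 1 = n - c`, which needs `n` odd.
-/

theorem Adj1.symm {n : ℕ} {a b : Fin n} (h : Adj1 a b) : Adj1 b a :=
  Or.symm h

namespace IsNumbrix1

variable {n : ℕ} {f : Fin n → ℕ}

theorem exists_apply_eq (hf : IsNumbrix1 f) {k : ℕ} (hk₁ : 1 ≤ k) (hk : k ≤ n) :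
    ∃ i, f i = k := by
  obtain ⟨i, -, hi⟩ := Finset.surj_on_of_inj_on_of_card_le (s := Finset.univ)
    (t := Finset.Icc 1 n) (fun i _ => f i) (fun i _ => Finset.mem_Icc.2 (hf.1 i))
    (fun _ _ _ _ h => hf.2.1 h) (by simp) k (Finset.mem_Icc.2 ⟨hk₁, hk⟩)
  exact ⟨i, hi.symm⟩

theorem reverse (hf : IsNumbrix1 f) : IsNumbrix1 (fun i => n + 1 - f i) := by
  obtain ⟨hbound, hinj, hadj⟩ := hf
  refine ⟨fun c => ?_, fun a b hab => ?_, fun c c' h => ?_⟩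
  · have := hbound c
    exact ⟨by simp only; omega, by simp only; omega⟩
  · have := hbound a; have := hbound b
    exact hinj (by simp only at hab; omega)
  · have := hbound c; have := hbound c'
    exact (hadj c' c (by simp only at h; omega)).symm

theorem apply_zero_eq_one_or_eq (hf : IsNumbrix1 f) (hn : 0 < n) :
    f ⟨0, hn⟩ = 1 ∨ f ⟨0, hn⟩ = n := by
  by_contra! hne
  have := hf.1 ⟨0, hn⟩
  obtain ⟨x, hx⟩ := hf.exists_apply_eq (k := f ⟨0, hn⟩ - 1) (by omega) (by omega)
  obtain ⟨y, hy⟩ := hf.exists_apply_eq (k := f ⟨0, hn⟩ + 1) (by omega) (by omega)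
  -- the values `f 0 - 1` and `f 0 + 1` would both sit at cell `1`, the only neighbour of cell `0`
  have hxy : x = y := by
    have hx₁ := hf.2.2 x ⟨0, hn⟩ (by omega)
    have hy₁ := hf.2.2 ⟨0, hn⟩ y hy
    unfold Adj1 at hx₁ hy₁
    exact Fin.ext (by simp only at hx₁ hy₁; omega)
  subst hxy
  omega

theorem apply_eq_val_add_one (hf : IsNumbrix1 f) (hn : 0 < n) (h₀ : f ⟨0, hn⟩ = 1) (i : Fin n) :
    f i = i.val + 1 := by
  obtain ⟨m, hm⟩ := i
  induction m using Nat.strong_induction_on with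
  | _ m ih =>
    rcases m with _ | k
    · exact h₀
    have hk : f ⟨k, by omega⟩ = k + 1 := ih k (by omega) _
    obtain ⟨y, hy⟩ := hf.exists_apply_eq (k := k + 2) (by omega) hm
    rcases hf.2.2 ⟨k, by omega⟩ y (by omega) with hy' | hy'
    · obtain rfl : y = ⟨k + 1, hm⟩ := Fin.ext hy'.symm
      exact hy
    · -- the only other neighbour of cell `k` already carries the value `k`
      simp only at hy'
      have := ih y.val (by omega) y.isLt
      simp only [Fin.eta] at this
      omega

theorem eq_val_add_one_or_eq_sub_val (hf : IsNumbrix1 f) :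
    f = (fun i => i.val + 1) ∨ f = (fun i => n - i.val) := by
  rcases Nat.eq_zero_or_pos n with rfl | hn
  · exact Or.inl (funext fun i => i.elim0)
  rcases hf.apply_zero_eq_one_or_eq hn with h₀ | h₀
  · exact Or.inl (funext (hf.apply_eq_val_add_one hn h₀))
  · refine Or.inr (funext fun i => ?_)
    have := hf.reverse.apply_eq_val_add_one hn (by simp only [h₀]; omega) i
    have := hf.1 i
    omega

theorem eq_of_apply_eq (hev : Even n) {g : Fin n → ℕ} (hf : IsNumbrix1 f) (hg : IsNumbrix1 g)
    {c : Fin n} (h : g c = f c) : g = f := by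
  obtain ⟨r, hr⟩ := hev
  have hc : c.val + 1 ≠ n - c.val := by omega
  rcases hf.eq_val_add_one_or_eq_sub_val with rfl | rfl <;>
    rcases hg.eq_val_add_one_or_eq_sub_val with rfl | rfl
  all_goals first | rfl | (simp only at h; omega)

end IsNumbrix1

theorem one_by_n_even_single_clue_general (n : ℕ) (hev : Even n)
    (c : Fin n) (v : ℕ)
    (hclue : ∃ f : Fin n → ℕ, IsNumbrix1 f ∧ f c = v) :
    ∃! f : Fin n → ℕ, IsNumbrix1 f ∧ f c = v := by
  obtain ⟨f, hf, rfl⟩ := hclue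
  exact ⟨f, ⟨hf, rfl⟩, fun g ⟨hg, hgc⟩ => hf.eq_of_apply_eq hev hg hgc⟩

theorem one_by_n_even_single_clue (n : ℕ) (hn : 2 ≤ n) (hev : Even n)
    (c : Fin n) (v : ℕ)
    (hclue : ∃ f : Fin n → ℕ, IsNumbrix1 f ∧ f c = v) :
    ∃! f : Fin n → ℕ, IsNumbrix1 f ∧ f c = v :=
  one_by_n_even_single_clue_general n hev c v hclue
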